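/- arXiv:1105.1139 — 2 statements merged into one kernel-verified Lean document; each statement's English description precedes it below -/
import Mathlib

section
/- The family of elements σ(m_1,…,m_s) of Γ̃, indexed by finite nonempty sequences (m_1,…,m_s) of nonnegative integers, is linearly independent over 𝔽₂; in particular distinct sequences give distinct nonzero elements, so S_0 is a linearly independent subset of Γ̃. -/
noncomputable section

abbrev Gam : Type := FreeAlgebra (ZMod 2) {k : ℕ // 1 ≤ k}

/-- The canonical generators γ_j, j ≥ 1 (γ_j := 0 for j = 0, never used). -/
def γ (j : ℕ) : Gam :=
  if h : 1 ≤ j then FreeAlgebra.ι (ZMod 2) (⟨j, h⟩ : {k : ℕ // 1 ≤ k}) else 0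

-- letters
def ltr (n : ℕ) : {k : ℕ // 1 ≤ k} := ⟨n + 1, Nat.le_add_left 1 n⟩

lemma ltr_inj : Function.Injective ltr := by
  intro a b h
  simpa [ltr] using congrArg Subtype.val h

def Mw (w : List ℕ) : Gam := (w.map fun j => FreeAlgebra.ι (ZMod 2) (ltr j)).prod

def wrd (i : ℕ) (l : List ℕ) : List ℕ :=
  (l.take i).map (fun k => 2 * k + 1) ++ 2 * (l.getD i 0) :: (l.drop (i + 1)).map (fun k => 2 * k + 1)

lemma γ_eq (n : ℕ) : γ (n + 1) = FreeAlgebra.ι (ZMod 2) (ltr n) := by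
  simp [γ, ltr]

lemma Mw_cons (j : ℕ) (w : List ℕ) :
    Mw (j :: w) = FreeAlgebra.ι (ZMod 2) (ltr j) * Mw w := by
  simp [Mw]

lemma prod_eq_Mw (l : List ℕ) :
    (l.map fun mi => γ (2 * mi + 2)).prod = Mw (l.map fun k => 2 * k + 1) := by
  induction l with
  | nil => simp [Mw]
  | cons a t ih =>
    rw [List.map_cons, List.map_cons, List.prod_cons, ih, Mw_cons,
      show 2 * a + 2 = (2 * a + 1) + 1 by ring, γ_eq]

section main
variable (Sq1 : Gam →ₗ[ZMod 2] Gam)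
    (hmul : ∀ x y : Gam, Sq1 (x * y) = x * Sq1 y + Sq1 x * y)
    (hγ : ∀ j : ℕ, 1 ≤ j → Sq1 (γ j) = if j % 2 = 0 then γ (j - 1) else 0)

include hmul in
lemma sq1_one : Sq1 1 = 0 := by
  have := hmul 1 1
  simp only [one_mul, mul_one] at this
  -- Sq1 1 = Sq1 1 + Sq1 1
  have h2 : Sq1 1 + Sq1 1 = Sq1 1 + 0 := by rw [add_zero]; exact this.symm
  exact (add_left_cancel h2)

include hmul hγ in
lemma sq1_prod (l : List ℕ) :
    Sq1 ((l.map fun mi => γ (2 * mi + 2)).prod)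
      = ∑ i ∈ Finset.range l.length, Mw (wrd i l) := by
  induction l with
  | nil => simpa using sq1_one Sq1 hmul
  | cons a t ih =>
    have heven : Sq1 (γ (2 * a + 2)) = γ (2 * a + 1) := by
      rw [hγ (2 * a + 2) (by omega)]
      simp [Nat.mul_add_mod]
    simp only [List.map_cons, List.prod_cons]
    rw [hmul, ih, heven]
    have h0 : γ (2 * a + 1) * (t.map fun mi => γ (2 * mi + 2)).prod = Mw (wrd 0 (a :: t)) := by
      rw [prod_eq_Mw, show (2 * a + 1) = (2 * a) + 1 from rfl, γ_eq, ← Mw_cons]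
      show Mw (2 * a :: List.map (fun k => 2 * k + 1) t) = _
      congr 1
    have hshift : ∀ i, γ (2 * a + 2) * Mw (wrd i t) = Mw (wrd (i + 1) (a :: t)) := by
      intro i
      rw [show 2 * a + 2 = (2 * a + 1) + 1 by ring, γ_eq, ← Mw_cons]
      show Mw ((2 * a + 1) :: wrd i t) = _
      congr 1
    rw [Finset.mul_sum]
    simp only [List.length_cons]
    rw [Finset.sum_range_succ']
    rw [h0]
    congr 1

end main

-- coefficient functional
def coeffAt (w : List ℕ) : Gam →ₗ[ZMod 2] ZMod 2 :=
  (Finsupp.lapply (FreeMonoid.ofList (w.map ltr))) ∘ₗ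
    (MonoidAlgebra.coeffLinearEquiv (ZMod 2)).toLinearMap ∘ₗ
    (FreeAlgebra.equivMonoidAlgebraFreeMonoid (R := ZMod 2)
      (X := {k : ℕ // 1 ≤ k})).toLinearMap

lemma equiv_Mw (w : List ℕ) :
    FreeAlgebra.equivMonoidAlgebraFreeMonoid (Mw w)
      = MonoidAlgebra.single (FreeMonoid.ofList (w.map ltr)) (1 : ZMod 2) := by
  induction w with
  | nil =>
    simp only [Mw, List.map_nil, List.prod_nil, map_one]
    rfl
  | cons a t ih =>
    rw [Mw_cons, map_mul, ih]
    have : FreeAlgebra.equivMonoidAlgebraFreeMonoid (FreeAlgebra.ι (ZMod 2) (ltr a))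
        = MonoidAlgebra.single (FreeMonoid.of (ltr a)) (1 : ZMod 2) := by
      simp [FreeAlgebra.equivMonoidAlgebraFreeMonoid]
    rw [this, MonoidAlgebra.single_mul_single, one_mul, List.map_cons, FreeMonoid.ofList_cons]

lemma coeffAt_Mw (w w' : List ℕ) :
    coeffAt w (Mw w') = if w' = w then 1 else 0 := by
  classical
  show (FreeAlgebra.equivMonoidAlgebraFreeMonoid (Mw w')).coeff (FreeMonoid.ofList (w.map ltr))
    = if w' = w then 1 else 0
  rw [equiv_Mw, MonoidAlgebra.coeff_single, Finsupp.single_apply]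
  congr 1
  simp only [eq_iff_iff]
  constructor
  · intro h
    have := congrArg FreeMonoid.toList h
    simp only [FreeMonoid.toList_ofList] at this
    exact List.map_injective_iff.2 ltr_inj this
  · rintro rfl; rfl

-- key injectivity
lemma wrd_eq_wrd0 (m m' : List ℕ) (hm : m ≠ []) (hm' : m' ≠ []) (i : ℕ) (hi : i < m'.length) :
    wrd i m' = wrd 0 m ↔ (i = 0 ∧ m' = m) := by
  obtain ⟨b, s, rfl⟩ := List.exists_cons_of_ne_nil hm
  obtain ⟨a, t, rfl⟩ := List.exists_cons_of_ne_nil hm'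
  constructor
  · intro h
    cases i with
    | zero =>
      simp only [wrd, List.take_zero, List.map_nil, List.nil_append, List.getD_cons_zero,
        List.drop_succ_cons, List.drop_zero] at h
      have h1 : 2 * a = 2 * b := (List.cons.injEq _ _ _ _ ▸ h).1
      have h2 : t.map (fun k => 2 * k + 1) = s.map (fun k => 2 * k + 1) :=
        (List.cons.injEq _ _ _ _ ▸ h).2
      have ha : a = b := by omega
      have ht : t = s := List.map_injective_iff.2 (fun x y hxy => by omega) h2
      exact ⟨rfl, by rw [ha, ht]⟩
    | succ n =>
      exfalso
      simp only [wrd, List.take_succ_cons, List.map_cons, List.cons_append,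
        List.take_zero, List.map_nil, List.nil_append, List.getD_cons_zero] at h
      have h1 : 2 * a + 1 = 2 * b := (List.cons.injEq _ _ _ _ ▸ h).1
      omega
  · rintro ⟨rfl, h⟩
    rw [h]

/-- The family σ(m_1,…,m_s) = ([2m_1+2,…,2m_s+2])Sq¹, indexed by finite
nonempty sequences of nonnegative integers, is linearly independent over 𝔽₂.
Here Sq¹ is (any) 𝔽₂-linear derivation on Γ̃ with (γ_j)Sq¹ = γ_{j-1} for j even
and 0 for j odd. -/
theorem sigma_family_linearIndependent
    (Sq1 : Gam →ₗ[ZMod 2] Gam)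
    (hmul : ∀ x y : Gam, Sq1 (x * y) = x * Sq1 y + Sq1 x * y)
    (hγ : ∀ j : ℕ, 1 ≤ j → Sq1 (γ j) = if j % 2 = 0 then γ (j - 1) else 0) :
    LinearIndependent (ZMod 2)
      (fun m : {l : List ℕ // l ≠ []} =>
        Sq1 ((m.1.map fun mi => γ (2 * mi + 2)).prod)) := by
  rw [linearIndependent_iff]
  intro l hl
  ext m
  have key : ∀ m' : {l : List ℕ // l ≠ []},
      coeffAt (wrd 0 m.1) (Sq1 ((m'.1.map fun mi => γ (2 * mi + 2)).prod))
        = if m' = m then 1 else 0 := by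
    intro m'
    rw [sq1_prod Sq1 hmul hγ, map_sum]
    have : ∀ i ∈ Finset.range m'.1.length,
        coeffAt (wrd 0 m.1) (Mw (wrd i m'.1)) = if i = 0 ∧ m'.1 = m.1 then 1 else 0 := by
      intro i hi
      rw [coeffAt_Mw, if_congr (wrd_eq_wrd0 m.1 m'.1 m.2 m'.2 i (Finset.mem_range.1 hi)) rfl rfl]
    rw [Finset.sum_congr rfl this]
    by_cases h : m' = m
    · subst h
      rw [Finset.sum_eq_single 0]
      · simp
      · intro i _ hi0; simp [hi0]
      · intro h0
        exfalso
        apply h0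
        apply Finset.mem_range.2
        obtain ⟨a, t, h⟩ := List.exists_cons_of_ne_nil m'.2
        rw [h]
        simp
    · have hne : m'.1 ≠ m.1 := fun hc => h (Subtype.ext hc)
      simp [hne, h]
  have := congrArg (coeffAt (wrd 0 m.1)) hl
  rw [map_zero, Finsupp.linearCombination_apply, Finsupp.sum, map_sum] at this
  simp only [map_smul, key] at this
  rw [Finset.sum_congr rfl (fun m' _ => by rw [smul_eq_mul])] at this
  by_cases hmem : m ∈ l.support
  · rw [Finset.sum_eq_single m (fun b _ hb => by simp [hb]) (fun h => absurd hmem h)] at this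
    simpa using this
  · simpa using Finsupp.notMem_support_iff.1 hmem

end
end

section
/- Let c_{s,d} = dim_{𝔽₂} Δ(0)_{s,d}, and for r, a ≥ 1 define η_{r,a} = 0 if a is even and η_{r,a} = binomial((a−1)/2, r−1) if a is odd. Then c_{0,0} = 1, c_{s,0} = 0 for s > 0, c_{0,d} = 0 for d > 0, and for all s, d ≥ 1: c_{s,d} = Σ_{r=1}^{s} Σ_{a=1}^{d} η_{r,a} · c_{s−r, d−a}. -/
set_option synthInstance.maxHeartbeats 1000000
set_option maxHeartbeats 1000000
set_option linter.unusedSectionVars false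

noncomputable section

/-- Γ̃_{s,d}: the 𝔽₂-span of the monomials of length s and degree d. -/
def GammaSD (s d : ℕ) : Submodule (ZMod 2) Gam :=
  Submodule.span (ZMod 2)
    {x | ∃ L : List ℕ, (∀ i ∈ L, 1 ≤ i) ∧ L.length = s ∧ L.sum = d ∧ x = (L.map γ).prod}

/-- c_{s,d} = dim_{𝔽₂} Δ(0)_{s,d}, where Δ(0)_{s,d} = ker(Sq¹) ∩ Γ̃_{s,d}. -/
def cdim (Sq1 : Gam →ₗ[ZMod 2] Gam) (s d : ℕ) : ℕ :=
  Module.finrank (ZMod 2) ↥(LinearMap.ker Sq1 ⊓ GammaSD s d)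

/-- η_{r,a} = 0 for a even, and binomial((a-1)/2, r-1) for a odd. -/
def η (r a : ℕ) : ℕ := if a % 2 = 0 then 0 else Nat.choose ((a - 1) / 2) (r - 1)

lemma sum_Icc_choose_add (k : ℕ) : ∀ (B A : ℕ), A ≤ B + 1 →
    (∑ n ∈ Finset.Icc A B, n.choose k) + A.choose (k+1) = (B+1).choose (k+1) := by
  intro B
  induction B with
  | zero =>
    intro A hA
    interval_cases A
    · simp [Nat.choose_succ_succ]
    · simp
  | succ B ih =>
    intro A hA
    rcases Nat.lt_or_ge A (B + 2) with h | h
    · have hAB : A ≤ B + 1 := by omega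
      rw [Finset.sum_Icc_succ_top hAB]
      have := ih A hAB
      have pas : (B+1+1).choose (k+1) = (B+1).choose k + (B+1).choose (k+1) :=
        Nat.choose_succ_succ (B+1) k
      omega
    · have hA2 : A = B + 2 := by omega
      subst hA2
      simp [Nat.choose_succ_succ]

lemma eta_odd (r a : ℕ) (h : a % 2 = 1) : η r a = ((a-1)/2).choose (r-1) := by
  simp [η, h]

lemma eta_ne_zero {r a : ℕ} (h : η r a ≠ 0) : a % 2 = 1 ∧ 2*r ≤ a + 1 := by
  by_cases hp : a % 2 = 0
  · simp [η, hp] at h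
  · have hp1 : a % 2 = 1 := by omega
    refine ⟨hp1, ?_⟩
    rw [eta_odd _ _ hp1] at h
    have : ¬ ((a-1)/2 < r-1) := fun hc => h (Nat.choose_eq_zero_of_lt hc)
    omega

lemma eta_succ_sum (s d : ℕ) : η s d + η s (d+1) = (d/2).choose (s-1) := by
  rcases Nat.mod_two_eq_zero_or_one d with h | h
  · rw [show η s d = 0 by simp [η, h], eta_odd s (d+1) (by omega), zero_add]
    congr 1 <;> omega
  · rw [eta_odd s d h, show η s (d+1) = 0 by simp [η, show (d+1)%2=0 by omega], add_zero]
    congr 1 <;> omega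

lemma recurrence_abstract (c : ℕ → ℕ → ℕ)
    (h00 : c 0 0 = 1)
    (h0d : ∀ e, 0 < e → c 0 e = 0)
    (hlow : ∀ t e, 1 ≤ t → e < t → c t e = 0)
    (hrec : ∀ t e, 1 ≤ t → c t e + c t (e+1) = e.choose (t-1)) :
    ∀ s d, 1 ≤ s →
      c s d = ∑ r ∈ Finset.Icc 1 s, ∑ a ∈ Finset.Icc 1 d, η r a * c (s - r) (d - a) := by
  intro s d hs
  obtain ⟨s', rfl⟩ : ∃ s', s = s' + 1 := ⟨s - 1, by omega⟩
  set f : ℕ → ℕ :=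
    fun e => ∑ r ∈ Finset.Icc 1 (s'+1), ∑ a ∈ Finset.Icc 1 e, η r a * c (s'+1 - r) (e - a)
    with hf
  -- f vanishes below the diagonal
  have fzero : ∀ e, e < s'+1 → f e = 0 := by
    intro e he
    apply Finset.sum_eq_zero
    intro r hr
    apply Finset.sum_eq_zero
    intro a ha
    simp only [Finset.mem_Icc] at hr ha
    by_contra hne
    obtain ⟨hη, hc⟩ := Nat.mul_ne_zero_iff.mp hne
    obtain ⟨hodd, hra⟩ := eta_ne_zero hη
    rcases Nat.eq_or_lt_of_le hr.2 with hres | hlt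
    · -- r = s'+1
      have h1 : s'+1-r = 0 := by omega
      rw [h1] at hc
      have : e - a = 0 := by
        by_contra h2
        exact hc (h0d _ (by omega))
      omega
    · have h1 : 1 ≤ s'+1-r := by omega
      have : ¬ (e - a < s'+1-r) := fun h2 => hc (hlow _ _ h1 h2)
      omega
  -- the key step identity
  have fstep : ∀ e, f e + f (e+1) = e.choose s' := by
    intro e
    -- expand f (e+1)
    have hsum0 : ∀ r, 1 ≤ r → r ≤ s' + 1 →
        η r (e+1) * c (s'+1-r) 0 = if r = s'+1 then η (s'+1) (e+1) else 0 := by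
      intro r h1 h2
      rcases Nat.eq_or_lt_of_le h2 with hres | hlt
      · rw [if_pos hres, hres]
        simp [Nat.sub_self, h00]
      · rw [if_neg (by omega), hlow (s'+1-r) 0 (by omega) (by omega), mul_zero]
    have expand : f (e+1)
        = (∑ r ∈ Finset.Icc 1 (s'+1), ∑ a ∈ Finset.Icc 1 e, η r a * c (s'+1 - r) (e+1 - a))
          + η (s'+1) (e+1) := by
      have h1 : ∀ r ∈ Finset.Icc 1 (s'+1),
          ∑ a ∈ Finset.Icc 1 (e+1), η r a * c (s'+1 - r) (e+1 - a)
          = (∑ a ∈ Finset.Icc 1 e, η r a * c (s'+1 - r) (e+1 - a))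
            + (if r = s'+1 then η (s'+1) (e+1) else 0) := by
        intro r hr
        simp only [Finset.mem_Icc] at hr
        rw [Finset.sum_Icc_succ_top (by omega : (1:ℕ) ≤ e+1), Nat.sub_self,
          hsum0 r hr.1 hr.2]
      simp only [hf]
      rw [Finset.sum_congr rfl h1, Finset.sum_add_distrib, Finset.sum_ite_eq'
        (Finset.Icc 1 (s'+1)) (s'+1)]
      simp [Finset.mem_Icc]
    -- combine
    have combine : f e + f (e+1)
        = (∑ r ∈ Finset.Icc 1 (s'+1), ∑ a ∈ Finset.Icc 1 e,
            η r a * (c (s'+1 - r) (e - a) + c (s'+1 - r) ((e-a)+1)))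
          + η (s'+1) (e+1) := by
      rw [expand, ← add_assoc]
      simp only [hf]
      rw [← Finset.sum_add_distrib]
      congr 1
      apply Finset.sum_congr rfl
      intro r hr
      rw [← Finset.sum_add_distrib]
      apply Finset.sum_congr rfl
      intro a ha
      simp only [Finset.mem_Icc] at ha
      rw [show e + 1 - a = (e - a) + 1 by omega, ← Nat.mul_add]
    -- evaluate the bracket
    have inner_eq : ∀ r ∈ Finset.Icc 1 (s'+1),
        (∑ a ∈ Finset.Icc 1 e, η r a * (c (s'+1 - r) (e - a) + c (s'+1 - r) ((e-a)+1)))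
        = if r = s'+1 then η (s'+1) e else ∑ a ∈ Finset.Icc 1 e, η r a * (e-a).choose (s'-r) := by
      intro r hr
      simp only [Finset.mem_Icc] at hr
      rcases Nat.eq_or_lt_of_le hr.2 with hres | hlt
      · rw [if_pos hres, hres, Nat.sub_self]
        -- only a = e contributes
        rcases Nat.eq_zero_or_pos e with rfl | he
        · simp [η]
        rw [Finset.sum_eq_single e]
        · rw [Nat.sub_self, h00, h0d 1 (by omega)]
          simp
        · intro a ha hne
          simp only [Finset.mem_Icc] at ha
          rw [h0d (e-a) (by omega), h0d ((e-a)+1) (by omega)]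
          simp
        · intro h; simp only [Finset.mem_Icc] at h; omega
      · rw [if_neg (by omega)]
        apply Finset.sum_congr rfl
        intro a ha
        have h1 : 1 ≤ s'+1-r := by omega
        rw [hrec _ _ h1, show s'+1-r-1 = s'-r by omega]
    -- sum over r with the split at r = s'+1
    have main : f e + f (e+1)
        = (∑ r ∈ Finset.Icc 1 s', ∑ a ∈ Finset.Icc 1 e, η r a * (e-a).choose (s'-r))
          + ((e/2).choose s') := by
      have h2 : ∀ r ∈ Finset.Icc 1 s',
          (if r = s'+1 then η (s'+1) e else ∑ a ∈ Finset.Icc 1 e, η r a * (e-a).choose (s'-r))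
          = ∑ a ∈ Finset.Icc 1 e, η r a * (e-a).choose (s'-r) := by
        intro r hr
        simp only [Finset.mem_Icc] at hr
        rw [if_neg (by omega)]
      rw [combine, Finset.sum_congr rfl inner_eq,
        Finset.sum_Icc_succ_top (by omega : (1:ℕ) ≤ s'+1), if_pos rfl,
        Finset.sum_congr rfl h2]
      have h3 := eta_succ_sum (s'+1) e
      rw [Nat.add_sub_cancel] at h3
      omega
    rw [main]
    -- now handle the main double sum
    rcases Nat.eq_zero_or_pos s' with rfl | hs'
    · simp
    rcases Nat.eq_zero_or_pos e with rfl | he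
    · simp [Nat.choose_eq_zero_of_lt hs']
    -- swap and evaluate inner r-sum by Vandermonde
    have vand : ∀ a ∈ Finset.Icc 1 e,
        (∑ r ∈ Finset.Icc 1 s', η r a * (e-a).choose (s'-r))
        = if a % 2 = 1 then ((a-1)/2 + (e-a)).choose (s'-1) else 0 := by
      intro a ha
      simp only [Finset.mem_Icc] at ha
      rcases Nat.mod_two_eq_zero_or_one a with hpar | hpar
      · rw [if_neg (by omega)]
        apply Finset.sum_eq_zero
        intro r hr
        simp [η, hpar]
      · rw [if_pos hpar]
        have vdm : ((a-1)/2 + (e-a)).choose (s'-1)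
            = ∑ k ∈ Finset.range ((s'-1)+1), ((a-1)/2).choose k * (e-a).choose ((s'-1)-k) := by
          rw [Nat.add_choose_eq, Finset.Nat.sum_antidiagonal_eq_sum_range_succ
            (fun p q => ((a-1)/2).choose p * (e-a).choose q)]
        rw [show (s'-1)+1 = s' by omega] at vdm
        rw [vdm, ← Finset.Ico_add_one_right_eq_Icc, Finset.sum_Ico_eq_sum_range, Nat.add_sub_cancel]
        apply Finset.sum_congr rfl
        intro ρ hρ
        simp only [Finset.mem_range] at hρ
        rw [eta_odd _ _ hpar, show 1 + ρ - 1 = ρ by omega, show s' - (1+ρ) = s'-1-ρ by omega]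
    have swap : (∑ r ∈ Finset.Icc 1 s', ∑ a ∈ Finset.Icc 1 e, η r a * (e-a).choose (s'-r))
        = ∑ a ∈ Finset.Icc 1 e, (if a % 2 = 1 then ((a-1)/2 + (e-a)).choose (s'-1) else 0) := by
      rw [Finset.sum_comm]
      exact Finset.sum_congr rfl vand
    rw [swap, ← Finset.sum_filter]
    have reflect : (∑ a ∈ (Finset.Icc 1 e).filter (fun a => a % 2 = 1),
          ((a-1)/2 + (e-a)).choose (s'-1))
        = ∑ n ∈ Finset.Icc (e/2) (e-1), n.choose (s'-1) := by
      refine Finset.sum_nbij' (fun a => (a-1)/2 + (e-a)) (fun n => 2*(e-1-n)+1) ?_ ?_ ?_ ?_ ?_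
      · intro a ha
        simp only [Finset.mem_filter, Finset.mem_Icc] at ha ⊢
        omega
      · intro n hn
        simp only [Finset.mem_filter, Finset.mem_Icc] at hn ⊢
        omega
      · intro a ha
        simp only [Finset.mem_filter, Finset.mem_Icc] at ha
        omega
      · intro n hn
        simp only [Finset.mem_filter, Finset.mem_Icc] at hn
        omega
      · intro a ha
        rfl
    rw [reflect]
    have key := sum_Icc_choose_add (s'-1) (e-1) (e/2) (by omega)
    rw [show e-1+1 = e by omega, show s'-1+1 = s' by omega] at key
    omega
  -- conclude by induction on d
  suffices h : ∀ e, c (s'+1) e = f e by exact h d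
  intro e
  induction e with
  | zero => rw [hlow (s'+1) 0 (by omega) (by omega), fzero 0 (by omega)]
  | succ e ihe =>
    have h1 := hrec (s'+1) e (by omega)
    have h2 := fstep e
    rw [Nat.add_sub_cancel] at h1
    omega

def Fcomp : ℕ → ℕ → Finset (List ℕ)
  | 0, d => if d = 0 then {[]} else ∅
  | (s+1), d => (Finset.Icc 1 d).biUnion (fun j => (Fcomp s (d-j)).image (j :: ·))

lemma mem_Fcomp : ∀ (s d : ℕ) (L : List ℕ),
    L ∈ Fcomp s d ↔ (∀ i ∈ L, 1 ≤ i) ∧ L.length = s ∧ L.sum = d := by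
  intro s
  induction s with
  | zero =>
    intro d L
    simp only [Fcomp]
    split_ifs with h
    · subst h
      constructor
      · intro hL; simp at hL; subst hL; simp
      · rintro ⟨-, h1, h2⟩
        rw [List.length_eq_zero_iff] at h1; subst h1; simp
    · constructor
      · intro hL; simp at hL
      · rintro ⟨-, h1, h2⟩
        rw [List.length_eq_zero_iff] at h1; subst h1; simp at h2; omega
  | succ s ih =>
    intro d L
    simp only [Fcomp, Finset.mem_biUnion, Finset.mem_image, Finset.mem_Icc]
    constructor
    · rintro ⟨j, ⟨hj1, hjd⟩, L', hL', rfl⟩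
      obtain ⟨he, hlen, hsum⟩ := (ih _ _).1 hL'
      refine ⟨?_, by simp [hlen], by simp [hsum]; omega⟩
      intro i hi
      rcases List.mem_cons.1 hi with rfl | h
      · exact hj1
      · exact he i h
    · rintro ⟨he, hlen, hsum⟩
      match L with
      | [] => simp at hlen
      | j :: L' =>
        have hj : 1 ≤ j := he j (by simp)
        have hLe : ∀ i ∈ L', 1 ≤ i := fun i hi => he i (by simp [hi])
        simp only [List.length_cons, Nat.succ.injEq] at hlen
        simp only [List.sum_cons] at hsum
        refine ⟨j, ⟨hj, by omega⟩, L', (ih _ _).2 ⟨hLe, hlen, by omega⟩, rfl⟩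

lemma Fcomp_empty (s d : ℕ) (h : d < s) : Fcomp s d = ∅ := by
  ext L
  simp only [Finset.notMem_empty, iff_false, mem_Fcomp]
  rintro ⟨he, hlen, hsum⟩
  have : L.length ≤ L.sum := by
    clear hlen hsum h
    induction L with
    | nil => simp
    | cons a t iht =>
      have : 1 ≤ a := he a (by simp)
      have := iht (fun i hi => he i (by simp [hi]))
      simp; omega
  omega

lemma Fcomp_zero_pos (d : ℕ) (h : 0 < d) : Fcomp 0 d = ∅ := by
  simp [Fcomp, Nat.pos_iff_ne_zero.1 h]

lemma card_Fcomp : ∀ (s d : ℕ), 1 ≤ s → 1 ≤ d → (Fcomp s d).card = (d-1).choose (s-1) := by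
  intro s
  induction s with
  | zero => omega
  | succ s ih =>
    intro d _ hd
    have hdisj : ∀ j1 ∈ Finset.Icc 1 d, ∀ j2 ∈ Finset.Icc 1 d, j1 ≠ j2 →
        Disjoint ((Fcomp s (d-j1)).image (j1 :: ·)) ((Fcomp s (d-j2)).image (j2 :: ·)) := by
      intro j1 _ j2 _ hne
      simp only [Finset.disjoint_left, Finset.mem_image]
      rintro L ⟨L1, -, rfl⟩ ⟨L2, -, hL⟩
      exact hne (by injection hL.symm)
    have : (Fcomp (s+1) d).card = ∑ j ∈ Finset.Icc 1 d, (Fcomp s (d-j)).card := by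
      rw [show Fcomp (s+1) d = (Finset.Icc 1 d).biUnion (fun j => (Fcomp s (d-j)).image (j :: ·)) from rfl,
        Finset.card_biUnion hdisj]
      exact Finset.sum_congr rfl fun j _ => Finset.card_image_of_injective _ (fun a b h => by injection h)
    rw [this]
    rcases Nat.eq_zero_or_pos s with rfl | hs
    · -- s = 0 : sum over j of card (Fcomp 0 (d-j)) = [only j = d gives 1]
      rw [Finset.sum_eq_single d]
      · simp [Fcomp]
      · intro j hj hne
        simp only [Finset.mem_Icc] at hj
        rw [Fcomp_zero_pos _ (by omega)]; simp
      · intro h; simp at h; omega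
    · -- s ≥ 1
      have hstep : ∀ j ∈ Finset.Icc 1 d, (Fcomp s (d-j)).card
          = if j ≤ d - 1 then (d-j-1).choose (s-1) else 0 := by
        intro j hj
        simp only [Finset.mem_Icc] at hj
        by_cases hjd : j ≤ d - 1
        · rw [if_pos hjd, ih (d-j) hs (by omega)]
        · rw [if_neg hjd]
          have : j = d := by omega
          subst this
          simp [Fcomp_empty s 0 hs]
      rw [Finset.sum_congr rfl hstep]
      -- ∑ j ∈ Icc 1 d, ite ... = ∑ j ∈ Icc 1 (d-1), (d-j-1).choose (s-1)
      rcases Nat.eq_or_lt_of_le hd with h1 | hd2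
      · -- d = 1
        rw [← h1]
        simp [Nat.choose_eq_zero_of_lt hs]
      · -- d ≥ 2, reindex n = d-1-j : j ∈ Icc 1 (d-1) ↔ n ∈ Icc 0 (d-2)
        have split : ∑ j ∈ Finset.Icc 1 d, (if j ≤ d - 1 then (d-j-1).choose (s-1) else 0)
            = ∑ j ∈ Finset.Icc 1 (d-1), (d-j-1).choose (s-1) := by
          rw [show d = (d-1) + 1 by omega, Finset.sum_Icc_succ_top (by omega)]
          simp only [show ¬ ((d-1)+1 ≤ (d-1)+1-1) by omega, if_false, add_zero]
          refine Finset.sum_congr (by rw [show (d-1)+1-1 = d-1 by omega]) fun j hj => ?_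
          simp only [Finset.mem_Icc] at hj
          rw [if_pos (by omega)]
        rw [split]
        have reind : ∑ j ∈ Finset.Icc 1 (d-1), (d-j-1).choose (s-1)
            = ∑ n ∈ Finset.range (d-1), n.choose (s-1) := by
          rw [← Finset.Ico_add_one_right_eq_Icc, show (d-1)+1 = d by omega, Finset.sum_Ico_eq_sum_range,
            show d - 1 = d - 1 by rfl]
          rw [← Finset.sum_range_reflect (fun n => n.choose (s-1)) (d-1)]
          exact Finset.sum_congr rfl fun i hi => by
            simp only [Finset.mem_range] at hi; congr 1; omega
        rw [reind]
        have key := sum_Icc_choose_add (s-1) (d-2) 0 (by omega)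
        have hIcc : Finset.Icc 0 (d-2) = Finset.range (d-1) := by
          rw [← Finset.Ico_add_one_right_eq_Icc, ← Finset.range_eq_Ico]
          congr 1
          omega
        rw [hIcc, Nat.choose_zero_succ, add_zero, show (d-2)+1 = d-1 by omega,
          show (s-1)+1 = s by omega] at key
        rw [key, Nat.add_sub_cancel]
abbrev Idx : Type := {k : ℕ // 1 ≤ k}
abbrev M2 : Type := MonoidAlgebra (ZMod 2) (FreeMonoid Idx)

def eGM : Gam ≃ₐ[ZMod 2] M2 := FreeAlgebra.equivMonoidAlgebraFreeMonoid

def mono (L : List Idx) : M2 := MonoidAlgebra.single (FreeMonoid.ofList L) 1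

lemma mono_nil : mono [] = 1 := rfl

lemma mono_cons (a : Idx) (L : List Idx) : mono (a :: L) = mono [a] * mono L := by
  rw [mono, mono, mono, MonoidAlgebra.single_mul_single, one_mul]
  rfl

lemma eGM_ι (x : Idx) : eGM (FreeAlgebra.ι (ZMod 2) x) = mono [x] := by
  have : eGM (FreeAlgebra.ι (ZMod 2) x)
      = (FreeAlgebra.lift (ZMod 2)
          (fun x : Idx => (MonoidAlgebra.of (ZMod 2) (FreeMonoid Idx)) (FreeMonoid.of x)))
        (FreeAlgebra.ι (ZMod 2) x) := rfl
  rw [this, FreeAlgebra.lift_ι_apply]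
  rfl

lemma eGM_gamma (j : ℕ) (h : 1 ≤ j) : eGM (γ j) = mono [⟨j, h⟩] := by
  rw [γ, dif_pos h, eGM_ι]

lemma eGM_monomial : ∀ (L : List ℕ) (h : ∀ i ∈ L, 1 ≤ i),
    eGM ((L.map γ).prod) = mono (L.pmap (fun a ha => (⟨a, ha⟩ : Idx)) h) := by
  intro L
  induction L with
  | nil => intro h; simp [mono_nil]
  | cons a t ih =>
    intro h
    have ha : 1 ≤ a := h a (by simp)
    have ht : ∀ i ∈ t, 1 ≤ i := fun i hi => h i (by simp [hi])
    rw [List.map_cons, List.prod_cons, map_mul, eGM_gamma a ha, ih ht, ← mono_cons]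
    rfl

lemma map_val_pmap : ∀ (L : List ℕ) (h : ∀ i ∈ L, 1 ≤ i),
    ((L.pmap (fun a ha => (⟨a, ha⟩ : Idx)) h).map Subtype.val) = L := by
  intro L
  induction L with
  | nil => intro h; rfl
  | cons a t ih => intro h; simp [List.pmap, ih]

lemma pmap_map_val : ∀ (l : List Idx) (h : ∀ i ∈ l.map Subtype.val, 1 ≤ i),
    ((l.map Subtype.val).pmap (fun a ha => (⟨a, ha⟩ : Idx)) h) = l := by
  intro l
  induction l with
  | nil => intro h; rfl
  | cons a t ih =>
    intro h
    simp only [List.map_cons, List.pmap]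
    rw [ih]

/-- The set of words of length s and degree d. -/
def TW (s d : ℕ) : Set (FreeMonoid Idx) :=
  {w | (FreeMonoid.toList w).map Subtype.val ∈ Fcomp s d}

lemma mem_TW {s d : ℕ} {w : FreeMonoid Idx} :
    w ∈ TW s d ↔ (FreeMonoid.toList w).length = s
      ∧ ((FreeMonoid.toList w).map Subtype.val).sum = d := by
  rw [TW, Set.mem_setOf_eq, mem_Fcomp, List.length_map]
  have : ∀ i ∈ (FreeMonoid.toList w).map Subtype.val, 1 ≤ i := by
    intro i hi
    simp only [List.mem_map] at hi
    obtain ⟨x, -, rfl⟩ := hi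
    exact x.2
  tauto

abbrev CE : M2 ≃ₗ[ZMod 2] (FreeMonoid Idx →₀ ZMod 2) := MonoidAlgebra.coeffLinearEquiv (ZMod 2)

def G2 (s d : ℕ) : Submodule (ZMod 2) M2 :=
  (Finsupp.supported (ZMod 2) (ZMod 2) (TW s d)).map (CE.symm : _ →ₗ[ZMod 2] M2)

lemma single_eq_mono (w : FreeMonoid Idx) :
    (MonoidAlgebra.single w (1 : ZMod 2) : M2) = mono (FreeMonoid.toList w) := rfl

lemma G2_induction {s d : ℕ} {p : M2 → Prop} (hp0 : p 0)
    (hpadd : ∀ x y, p x → p y → p (x + y))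
    (hpsmul : ∀ (c : ZMod 2) x, p x → p (c • x))
    (hmem : ∀ w ∈ TW s d, p (MonoidAlgebra.single w 1)) :
    ∀ x ∈ G2 s d, p x := by
  intro x hx
  rw [G2, Finsupp.supported_eq_span_single, Submodule.map_span, ← Set.image_comp] at hx
  refine Submodule.span_induction (p := fun x _ => p x) ?_ hp0
    (fun a b _ _ => hpadd a b) (fun c a _ => hpsmul c a) hx
  rintro y ⟨w, hw, rfl⟩
  exact hmem w hw

lemma mono_mem_G2 (L : List Idx) : mono L ∈ G2 (L.length) ((L.map Subtype.val).sum) := by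
  rw [G2]
  refine ⟨Finsupp.single (FreeMonoid.ofList L) 1, ?_, rfl⟩
  apply Finsupp.single_mem_supported
  rw [mem_TW]
  exact ⟨rfl, rfl⟩

lemma mono_mem_G2' {s d : ℕ} (L : List Idx) (h1 : L.length = s)
    (h2 : (L.map Subtype.val).sum = d) : mono L ∈ G2 s d := by
  subst h1; subst h2; exact mono_mem_G2 L

lemma char2 (x : M2) : x + x = 0 := by
  rw [← two_smul (ZMod 2) x, show (2 : ZMod 2) = 0 by decide, zero_smul]

section Deriv

variable (Sq1 : Gam →ₗ[ZMod 2] Gam)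
variable (hmul : ∀ x y : Gam, Sq1 (x * y) = x * Sq1 y + Sq1 x * y)
variable (hγ : ∀ j : ℕ, 1 ≤ j → Sq1 (γ j) = if j % 2 = 0 then γ (j - 1) else 0)

def DM : M2 →ₗ[ZMod 2] M2 :=
  eGM.toLinearMap ∘ₗ Sq1 ∘ₗ (eGM.symm : M2 ≃ₐ[ZMod 2] Gam).toLinearMap

lemma DM_apply (x : M2) : DM Sq1 x = eGM (Sq1 (eGM.symm x)) := rfl

include hmul in
lemma DM_mul (x y : M2) : DM Sq1 (x * y) = x * DM Sq1 y + DM Sq1 x * y := by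
  rw [DM_apply, DM_apply, DM_apply, map_mul eGM.symm x y, hmul, map_add, map_mul, map_mul,
    AlgEquiv.apply_symm_apply, AlgEquiv.apply_symm_apply]

include hmul in
lemma DM_one : DM Sq1 1 = 0 := by
  have h := DM_mul Sq1 hmul 1 1
  rw [mul_one, one_mul, mul_one] at h
  have h2 : DM Sq1 1 + DM Sq1 1 = DM Sq1 1 + 0 := by rw [add_zero, ← h]
  exact (add_left_cancel h2)

/-- image of the generator under the differential -/
def Dgen (a : Idx) : M2 :=
  if h : a.val % 2 = 0 then mono [⟨a.val - 1, by omega⟩] else 0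

include hγ in
lemma DM_mono_single (a : Idx) : DM Sq1 (mono [a]) = Dgen a := by
  have hsymm : eGM.symm (mono [a]) = γ a.val := by
    rw [← eGM_gamma a.val a.2]
    simp only [AlgEquiv.symm_apply_apply]
  rw [DM_apply, hsymm, hγ a.val a.2, Dgen]
  by_cases h : a.val % 2 = 0
  · rw [if_pos h, dif_pos h, eGM_gamma (a.val - 1) (by have := a.2; omega)]
  · rw [if_neg h, dif_neg h, map_zero]

include hmul hγ in
lemma DM_mono_cons (a : Idx) (L : List Idx) :
    DM Sq1 (mono (a :: L)) = mono [a] * DM Sq1 (mono L) + Dgen a * mono L := by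
  rw [mono_cons, DM_mul Sq1 hmul, DM_mono_single Sq1 hγ]

end Deriv

lemma add_add_cancel (x y : M2) : (x + y) + x = y := by
  rw [add_comm x y, add_assoc, char2, add_zero]

/-- contracting homotopy weight -/
def hw (w : FreeMonoid Idx) : M2 :=
  match FreeMonoid.toList w with
  | [] => 0
  | a :: L => if _ : a.val % 2 = 1 then mono (⟨a.val + 1, by omega⟩ :: L) else 0

def hmap : M2 →ₗ[ZMod 2] M2 :=
  Finsupp.lsum (ZMod 2) (fun w => LinearMap.toSpanSingleton (ZMod 2) M2 (hw w)) ∘ₗ CE.toLinearMap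

lemma hmap_single (w : FreeMonoid Idx) (c : ZMod 2) :
    hmap (MonoidAlgebra.single w c) = c • hw w := by
  rw [hmap, LinearMap.comp_apply]
  erw [Finsupp.lsum_single]
  rfl

lemma hw_one : hw (FreeMonoid.ofList []) = 0 := rfl

lemma hw_cons (a : Idx) (L : List Idx) :
    hw (FreeMonoid.ofList (a :: L))
      = if _ : a.val % 2 = 1 then mono (⟨a.val + 1, by omega⟩ :: L) else 0 := rfl

lemma hmap_mono (L : List Idx) : hmap (mono L) = hw (FreeMonoid.ofList L) := by
  rw [mono]
  erw [hmap_single]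
  rw [one_smul]

lemma mono_mul_single (a : Idx) (w : FreeMonoid Idx) (c : ZMod 2) :
    mono [a] * MonoidAlgebra.single w c
      = MonoidAlgebra.single (FreeMonoid.ofList [a] * w) c := by
  have h := MonoidAlgebra.single_mul_single (R := ZMod 2) (M := FreeMonoid Idx)
    (m₁ := FreeMonoid.ofList [a]) (m₂ := w) (r₁ := 1) (r₂ := c)
  rw [one_mul] at h
  exact h

lemma hmap_mul_mono (a : Idx) (z : M2) :
    hmap (mono [a] * z)
      = (if _ : a.val % 2 = 1 then mono [⟨a.val + 1, by omega⟩] else 0) * z := by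
  induction z using MonoidAlgebra.induction_linear with
  | zero => rw [mul_zero, map_zero, mul_zero]
  | add f g hf hg => rw [mul_add, map_add, hf, hg, mul_add]
  | single w c =>
    rw [mono_mul_single, hmap_single]
    have h2 : hw (FreeMonoid.ofList [a] * w)
        = if _ : a.val % 2 = 1
          then mono (⟨a.val + 1, by omega⟩ :: FreeMonoid.toList w) else 0 := rfl
    rw [h2]
    split_ifs with h
    · rw [mono_cons, ← single_eq_mono, ← mul_smul_comm, MonoidAlgebra.smul_single', mul_one]
    · rw [smul_zero, zero_mul]

section Deriv2

variable (Sq1 : Gam →ₗ[ZMod 2] Gam)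
variable (hmul : ∀ x y : Gam, Sq1 (x * y) = x * Sq1 y + Sq1 x * y)
variable (hγ : ∀ j : ℕ, 1 ≤ j → Sq1 (γ j) = if j % 2 = 0 then γ (j - 1) else 0)

lemma mono_head_congr {b b' : Idx} (L : List Idx) (h : b.val = b'.val) :
    mono (b :: L) = mono (b' :: L) := by
  rw [Subtype.ext h]

lemma Dgen_even (a : Idx) (h : a.val % 2 = 0) :
    Dgen a = mono [⟨a.val - 1, by have := a.2; omega⟩] := by
  rw [Dgen, dif_pos h]

lemma Dgen_odd (a : Idx) (h : a.val % 2 = 1) : Dgen a = 0 := by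
  rw [Dgen, dif_neg (by omega)]

include hmul hγ in
lemma homot_mono (a : Idx) (L : List Idx) :
    DM Sq1 (hmap (mono (a :: L))) + hmap (DM Sq1 (mono (a :: L))) = mono (a :: L) := by
  have ha := a.2
  rcases Nat.mod_two_eq_zero_or_one a.val with h | h
  · -- a even
    have h0 : hmap (mono (a :: L)) = 0 := by
      rw [hmap_mono, hw_cons, dif_neg (by omega)]
    have h1 : hmap (Dgen a * mono L) = mono (a :: L) := by
      rw [Dgen_even a h, ← mono_cons, hmap_mono, hw_cons,
        dif_pos (show (a.val - 1) % 2 = 1 by omega)]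
      exact mono_head_congr L (show a.val - 1 + 1 = a.val by omega)
    rw [h0, map_zero, zero_add, DM_mono_cons Sq1 hmul hγ, map_add,
      hmap_mul_mono a, dif_neg (by omega), zero_mul, zero_add, h1]
  · -- a odd
    have h0 : hmap (mono (a :: L)) = mono (⟨a.val + 1, by omega⟩ :: L) := by
      rw [hmap_mono, hw_cons, dif_pos h]
    have hDc : Dgen (⟨a.val + 1, by omega⟩ : Idx) = mono [a] := by
      rw [Dgen_even _ (show (a.val + 1) % 2 = 0 by omega)]
      exact congrArg (fun b => mono [b]) (Subtype.ext (show a.val + 1 - 1 = a.val by omega))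
    rw [h0, DM_mono_cons Sq1 hmul hγ, DM_mono_cons Sq1 hmul hγ, hDc,
      Dgen_odd a h, zero_mul, add_zero, hmap_mul_mono a, dif_pos h, ← mono_cons]
    exact add_add_cancel _ _

include hmul hγ in
lemma DD_mono : ∀ (L : List Idx), DM Sq1 (DM Sq1 (mono L)) = 0 := by
  intro L
  induction L with
  | nil => rw [mono_nil, DM_one Sq1 hmul, map_zero]
  | cons a L ih =>
    have hDgen : DM Sq1 (Dgen a) = 0 := by
      rcases Nat.mod_two_eq_zero_or_one a.val with h | h
      · rw [Dgen_even a h, DM_mono_single Sq1 hγ,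
          Dgen_odd _ (show (a.val - 1) % 2 = 1 by have := a.2; omega)]
      · rw [Dgen_odd a h, map_zero]
    rw [DM_mono_cons Sq1 hmul hγ, map_add, DM_mul Sq1 hmul, DM_mul Sq1 hmul, ih, mul_zero,
      zero_add, DM_mono_single Sq1 hγ, hDgen, zero_mul, add_zero, char2]

include hmul hγ in
lemma DD_all (x : M2) : DM Sq1 (DM Sq1 x) = 0 := by
  induction x using MonoidAlgebra.induction_linear with
  | zero => rw [map_zero, map_zero]
  | add f g hf hg => rw [map_add, map_add, hf, hg, add_zero]
  | single w c =>
    have h1 : (MonoidAlgebra.single w c : M2) = c • MonoidAlgebra.single w (1 : ZMod 2) := by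
      rw [MonoidAlgebra.smul_single', mul_one]
    rw [h1, map_smul, map_smul, single_eq_mono, DD_mono Sq1 hmul hγ, smul_zero]

end Deriv2


section Grade

variable (Sq1 : Gam →ₗ[ZMod 2] Gam)
variable (hmul : ∀ x y : Gam, Sq1 (x * y) = x * Sq1 y + Sq1 x * y)
variable (hγ : ∀ j : ℕ, 1 ≤ j → Sq1 (γ j) = if j % 2 = 0 then γ (j - 1) else 0)

lemma mulLeft_G2 (a : Idx) (s d : ℕ) :
    ∀ x ∈ G2 s d, mono [a] * x ∈ G2 (s+1) (a.val + d) := by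
  apply G2_induction
  · rw [mul_zero]; exact Submodule.zero_mem _
  · intro x y hx hy; rw [mul_add]; exact Submodule.add_mem _ hx hy
  · intro c x hx; rw [mul_smul_comm]; exact Submodule.smul_mem _ c hx
  · intro w hw
    obtain ⟨hlen, hsum⟩ := mem_TW.mp hw
    rw [single_eq_mono, ← mono_cons]
    exact mono_mem_G2' _ (by simp only [List.length_cons, hlen])
      (by simp only [List.map_cons, List.sum_cons, hsum])

include hmul hγ in
lemma D_G2_mono : ∀ (L : List Idx),
    DM Sq1 (mono L) ∈ G2 L.length ((L.map Subtype.val).sum - 1) := by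
  intro L
  induction L with
  | nil => rw [mono_nil, DM_one Sq1 hmul]; exact Submodule.zero_mem _
  | cons a L ih =>
    have ha := a.2
    rw [DM_mono_cons Sq1 hmul hγ]
    apply Submodule.add_mem
    · -- mono [a] * DM (mono L)
      rcases L with _ | ⟨b, L'⟩
      · rw [mono_nil, DM_one Sq1 hmul, mul_zero]; exact Submodule.zero_mem _
      · have hbsum : 1 ≤ ((b :: L').map Subtype.val).sum := by
          have := b.2
          simp only [List.map_cons, List.sum_cons]
          omega
        have h1 := mulLeft_G2 a _ _ _ ih
        have h2 : ((a :: b :: L').map Subtype.val).sum - 1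
            = a.val + (((b :: L').map Subtype.val).sum - 1) := by
          simp only [List.map_cons, List.sum_cons] at *
          omega
        rw [show (a :: b :: L').length = (b :: L').length + 1 from rfl, h2]
        exact h1
    · -- Dgen a * mono L
      rcases Nat.mod_two_eq_zero_or_one a.val with h | h
      · rw [Dgen_even a h, ← mono_cons]
        refine mono_mem_G2' (s := (a :: L).length) _ (by simp) ?_
        simp only [List.map_cons, List.sum_cons]
        omega
      · rw [Dgen_odd a h, zero_mul]; exact Submodule.zero_mem _

include hmul hγ in
lemma D_G2 (s d : ℕ) : ∀ x ∈ G2 s (d+1), DM Sq1 x ∈ G2 s d := by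
  apply G2_induction
  · rw [map_zero]; exact Submodule.zero_mem _
  · intro x y hx hy; rw [map_add]; exact Submodule.add_mem _ hx hy
  · intro c x hx; rw [map_smul]; exact Submodule.smul_mem _ c hx
  · intro w hw
    obtain ⟨hlen, hsum⟩ := mem_TW.mp hw
    rw [single_eq_mono]
    have h1 := D_G2_mono Sq1 hmul hγ (FreeMonoid.toList w)
    rw [hlen, hsum] at h1
    simpa using h1

lemma hmap_G2_mono (s d : ℕ) (L : List Idx) (hlen : L.length = s)
    (hsum : (L.map Subtype.val).sum = d) : hmap (mono L) ∈ G2 s (d+1) := by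
  rw [hmap_mono]
  rcases L with _ | ⟨a, L⟩
  · rw [hw_one]; exact Submodule.zero_mem _
  · rw [hw_cons]
    split_ifs with h
    · apply mono_mem_G2' _ (by simpa using hlen)
      simp only [List.map_cons, List.sum_cons] at hsum ⊢
      omega
    · exact Submodule.zero_mem _

lemma hmap_G2 (s d : ℕ) : ∀ x ∈ G2 s d, hmap x ∈ G2 s (d+1) := by
  apply G2_induction
  · rw [map_zero]; exact Submodule.zero_mem _
  · intro x y hx hy; rw [map_add]; exact Submodule.add_mem _ hx hy
  · intro c x hx; rw [map_smul]; exact Submodule.smul_mem _ c hx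
  · intro w hw
    obtain ⟨hlen, hsum⟩ := mem_TW.mp hw
    rw [single_eq_mono]
    exact hmap_G2_mono s d _ hlen hsum

include hmul hγ in
lemma homot_mono' (L : List Idx) (hL : L ≠ []) :
    DM Sq1 (hmap (mono L)) + hmap (DM Sq1 (mono L)) = mono L := by
  rcases L with _ | ⟨a, L⟩
  · exact absurd rfl hL
  · exact homot_mono Sq1 hmul hγ a L

include hmul hγ in
lemma homot_G2 (s d : ℕ) (hs : 1 ≤ s) :
    ∀ x ∈ G2 s d, DM Sq1 (hmap x) + hmap (DM Sq1 x) = x := by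
  apply G2_induction
  · simp
  · intro x y hx hy
    rw [map_add, map_add, map_add, map_add, add_add_add_comm, hx, hy]
  · intro c x hx
    rw [map_smul, map_smul, map_smul, map_smul, ← smul_add, hx]
  · intro w hw
    obtain ⟨hlen, hsum⟩ := mem_TW.mp hw
    rw [single_eq_mono]
    apply homot_mono' Sq1 hmul hγ
    intro hnil
    rw [hnil] at hlen
    simp at hlen
    omega

include hmul hγ in
lemma map_DG2 (s d : ℕ) (hs : 1 ≤ s) :
    Submodule.map (DM Sq1) (G2 s (d+1)) = LinearMap.ker (DM Sq1) ⊓ G2 s d := by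
  apply le_antisymm
  · rintro _ ⟨x, hx, rfl⟩
    exact Submodule.mem_inf.mpr
      ⟨LinearMap.mem_ker.mpr (DD_all Sq1 hmul hγ x), D_G2 Sq1 hmul hγ s d x hx⟩
  · intro x hx
    obtain ⟨hk, hg⟩ := Submodule.mem_inf.mp hx
    have hh := homot_G2 Sq1 hmul hγ s d hs x hg
    rw [LinearMap.mem_ker.mp hk, map_zero, add_zero] at hh
    exact ⟨hmap x, hmap_G2 s d x hg, hh⟩

end Grade

lemma TW_finite (s d : ℕ) : (TW s d).Finite := by
  have heq : TW s d
      = (fun w : FreeMonoid Idx => (FreeMonoid.toList w).map Subtype.val) ⁻¹' ↑(Fcomp s d) := by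
    ext w
    simp [TW]
  rw [heq]
  apply Set.Finite.preimage ?_ (Fcomp s d).finite_toSet
  intro x _ y _ hxy
  exact List.map_injective_iff.mpr Subtype.val_injective hxy

lemma finrank_G2 (s d : ℕ) : Module.finrank (ZMod 2) ↥(G2 s d) = (Fcomp s d).card := by
  classical
  have hfin := TW_finite s d
  haveI := hfin.fintype
  have e1 : ↥(G2 s d) ≃ₗ[ZMod 2] (↥(TW s d) →₀ ZMod 2) :=
    (CE.symm.submoduleMap _).symm.trans (Finsupp.supportedEquivFinsupp (TW s d))
  rw [LinearEquiv.finrank_eq e1, Module.finrank_finsupp_self]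
  have e2 : ↥(TW s d) ≃ ↥(Fcomp s d) :=
    { toFun := fun w => ⟨(FreeMonoid.toList w.1).map Subtype.val, w.2⟩
      invFun := fun L => ⟨FreeMonoid.ofList ((L.1).pmap (fun a ha => (⟨a, ha⟩ : Idx))
          ((mem_Fcomp _ _ _).mp L.2).1), by
            show ((FreeMonoid.toList (FreeMonoid.ofList _)).map Subtype.val) ∈ Fcomp s d
            rw [FreeMonoid.toList_ofList, map_val_pmap]
            exact L.2⟩
      left_inv := by
        intro w
        apply Subtype.ext
        show FreeMonoid.ofList _ = w.1
        rw [pmap_map_val]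
        rfl
      right_inv := by
        intro L
        apply Subtype.ext
        show ((FreeMonoid.toList (FreeMonoid.ofList _)).map Subtype.val) = L.1
        rw [FreeMonoid.toList_ofList, map_val_pmap] }
  rw [Fintype.card_congr e2, Fintype.card_coe]

lemma G2_findim (s d : ℕ) : FiniteDimensional (ZMod 2) ↥(G2 s d) := by
  classical
  haveI := (TW_finite s d).fintype
  exact Module.Finite.equiv ((CE.symm.submoduleMap _).symm.trans
    (Finsupp.supportedEquivFinsupp (R := ZMod 2) (TW s d))).symm

section Dims

variable (Sq1 : Gam →ₗ[ZMod 2] Gam)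
variable (hmul : ∀ x y : Gam, Sq1 (x * y) = x * Sq1 y + Sq1 x * y)
variable (hγ : ∀ j : ℕ, 1 ≤ j → Sq1 (γ j) = if j % 2 = 0 then γ (j - 1) else 0)

include hmul hγ in
lemma dim_step (s d : ℕ) (hs : 1 ≤ s) :
    Module.finrank (ZMod 2) ↥(LinearMap.ker (DM Sq1) ⊓ G2 s d)
      + Module.finrank (ZMod 2) ↥(LinearMap.ker (DM Sq1) ⊓ G2 s (d+1))
      = (Fcomp s (d+1)).card := by
  haveI := G2_findim s (d+1)
  have h1 := LinearMap.finrank_range_add_finrank_ker ((DM Sq1).domRestrict (G2 s (d+1)))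
  rw [LinearMap.range_domRestrict, map_DG2 Sq1 hmul hγ s d hs, LinearMap.ker_domRestrict] at h1
  have hle : LinearMap.ker (DM Sq1) ⊓ G2 s (d+1) ≤ G2 s (d+1) := inf_le_right
  have heq : Submodule.comap (G2 s (d+1)).subtype (LinearMap.ker (DM Sq1))
      = Submodule.comap (G2 s (d+1)).subtype (LinearMap.ker (DM Sq1) ⊓ G2 s (d+1)) := by
    rw [Submodule.comap_inf, Submodule.comap_subtype_self, inf_top_eq]
  rw [heq] at h1
  have h2 : Module.finrank (ZMod 2)
        ↥(Submodule.comap (G2 s (d+1)).subtype (LinearMap.ker (DM Sq1) ⊓ G2 s (d+1)))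
      = Module.finrank (ZMod 2) ↥(LinearMap.ker (DM Sq1) ⊓ G2 s (d+1)) :=
    LinearEquiv.finrank_eq (Submodule.comapSubtypeEquivOfLe hle)
  rw [h2, finrank_G2] at h1
  omega

lemma map_GammaSD (s d : ℕ) :
    (GammaSD s d).map eGM.toLinearMap = G2 s d := by
  rw [GammaSD, Submodule.map_span, G2, Finsupp.supported_eq_span_single, Submodule.map_span,
    ← Set.image_comp]
  congr 1
  ext y
  constructor
  · rintro ⟨x, ⟨L, hL, hlen, hsum, rfl⟩, rfl⟩
    refine ⟨FreeMonoid.ofList (L.pmap (fun a ha => (⟨a, ha⟩ : Idx)) hL), ?_, ?_⟩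
    · rw [mem_TW, FreeMonoid.toList_ofList, List.length_pmap, map_val_pmap]
      exact ⟨hlen, hsum⟩
    · show (MonoidAlgebra.single _ 1 : M2) = eGM.toLinearMap _
      rw [single_eq_mono, FreeMonoid.toList_ofList]
      exact (eGM_monomial L hL).symm
  · rintro ⟨w, hw, rfl⟩
    obtain ⟨hlen, hsum⟩ := mem_TW.mp hw
    have hall : ∀ i ∈ (FreeMonoid.toList w).map Subtype.val, 1 ≤ i := by
      intro i hi
      simp only [List.mem_map] at hi
      obtain ⟨x, -, rfl⟩ := hi
      exact x.2
    refine ⟨((((FreeMonoid.toList w).map Subtype.val)).map γ).prod,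
      ⟨(FreeMonoid.toList w).map Subtype.val, hall, by simpa using hlen, hsum, rfl⟩, ?_⟩
    show eGM _ = _
    rw [eGM_monomial _ hall, pmap_map_val]
    exact (single_eq_mono w).symm

include hmul hγ in
lemma cdim_transport (s d : ℕ) :
    cdim Sq1 s d
      = Module.finrank (ZMod 2) ↥(LinearMap.ker (DM Sq1) ⊓ G2 s d) := by
  rw [cdim]
  have einj : Function.Injective eGM.toLinearMap := eGM.injective
  rw [LinearEquiv.finrank_eq (Submodule.equivMapOfInjective eGM.toLinearMap einj
    (LinearMap.ker Sq1 ⊓ GammaSD s d))]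
  have hmapeq : Submodule.map eGM.toLinearMap (LinearMap.ker Sq1 ⊓ GammaSD s d)
      = LinearMap.ker (DM Sq1) ⊓ G2 s d := by
    apply le_antisymm
    · rintro _ ⟨x, hx, rfl⟩
      obtain ⟨hk, hg⟩ := Submodule.mem_inf.mp hx
      refine Submodule.mem_inf.mpr ⟨?_, ?_⟩
      · rw [LinearMap.mem_ker, DM_apply]
        show eGM (Sq1 (eGM.symm (eGM x))) = 0
        rw [AlgEquiv.symm_apply_apply, LinearMap.mem_ker.mp hk, map_zero]
      · rw [← map_GammaSD]
        exact ⟨x, hg, rfl⟩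
    · intro x hx
      obtain ⟨hk, hg⟩ := Submodule.mem_inf.mp hx
      rw [← map_GammaSD] at hg
      obtain ⟨y, hy, rfl⟩ := hg
      refine ⟨y, Submodule.mem_inf.mpr ⟨?_, hy⟩, rfl⟩
      rw [LinearMap.mem_ker]
      apply eGM.injective
      rw [map_zero]
      have := LinearMap.mem_ker.mp hk
      rw [DM_apply] at this
      show eGM (Sq1 y) = 0
      calc eGM (Sq1 y) = eGM (Sq1 (eGM.symm (eGM.toLinearMap y))) := by
            rw [show eGM.symm (eGM.toLinearMap y) = y from eGM.symm_apply_apply y]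
        _ = 0 := this
  rw [hmapeq]

end Dims

section Final

variable (Sq1 : Gam →ₗ[ZMod 2] Gam)
variable (hmul : ∀ x y : Gam, Sq1 (x * y) = x * Sq1 y + Sq1 x * y)
variable (hγ : ∀ j : ℕ, 1 ≤ j → Sq1 (γ j) = if j % 2 = 0 then γ (j - 1) else 0)

include hmul in
lemma G2_00_le_ker : G2 0 0 ≤ LinearMap.ker (DM Sq1) := by
  have hmain : ∀ x ∈ G2 0 0, x ∈ LinearMap.ker (DM Sq1) := by
    apply G2_induction
    · exact Submodule.zero_mem _
    · exact fun x y hx hy => Submodule.add_mem _ hx hy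
    · exact fun c x hx => Submodule.smul_mem _ c hx
    · intro w hw
      obtain ⟨hlen, -⟩ := mem_TW.mp hw
      have hwnil : FreeMonoid.toList w = [] := List.length_eq_zero_iff.mp hlen
      rw [single_eq_mono, hwnil, mono_nil]
      exact LinearMap.mem_ker.mpr (DM_one Sq1 hmul)
  exact fun x hx => hmain x hx

lemma G2_bot (s d : ℕ) (h : Fcomp s d = ∅) : G2 s d = ⊥ := by
  rw [G2, show TW s d = (∅ : Set _) by ext w; simp [TW, h], Finsupp.supported_empty, Submodule.map_bot]

include hmul hγ in
lemma cdim_00 : cdim Sq1 0 0 = 1 := by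
  rw [cdim_transport Sq1 hmul hγ, inf_eq_right.mpr (G2_00_le_ker Sq1 hmul), finrank_G2]
  simp [Fcomp]

include hmul hγ in
lemma cdim_bot (s d : ℕ) (h : Fcomp s d = ∅) : cdim Sq1 s d = 0 := by
  rw [cdim_transport Sq1 hmul hγ, G2_bot s d h, inf_bot_eq, finrank_bot]

end Final

/-- The recurrence for the dimensions c_{s,d} of the bigraded components of
Δ(0) = ker Sq¹.  Here Sq¹ is (any) 𝔽₂-linear derivation on Γ̃ with
(γ_j)Sq¹ = γ_{j-1} for j even and 0 for j odd. -/
theorem cdim_recurrence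
    (Sq1 : Gam →ₗ[ZMod 2] Gam)
    (hmul : ∀ x y : Gam, Sq1 (x * y) = x * Sq1 y + Sq1 x * y)
    (hγ : ∀ j : ℕ, 1 ≤ j → Sq1 (γ j) = if j % 2 = 0 then γ (j - 1) else 0) :
    cdim Sq1 0 0 = 1 ∧
    (∀ s : ℕ, 0 < s → cdim Sq1 s 0 = 0) ∧
    (∀ d : ℕ, 0 < d → cdim Sq1 0 d = 0) ∧
    (∀ s d : ℕ, 1 ≤ s → 1 ≤ d →
      cdim Sq1 s d =
        ∑ r ∈ Finset.Icc 1 s, ∑ a ∈ Finset.Icc 1 d, η r a * cdim Sq1 (s - r) (d - a)) := by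
  have h00 : cdim Sq1 0 0 = 1 := cdim_00 Sq1 hmul hγ
  have hlow : ∀ t e : ℕ, 1 ≤ t → e < t → cdim Sq1 t e = 0 := fun t e _ he =>
    cdim_bot Sq1 hmul hγ t e (Fcomp_empty t e he)
  have h0d : ∀ e : ℕ, 0 < e → cdim Sq1 0 e = 0 := fun e he =>
    cdim_bot Sq1 hmul hγ 0 e (Fcomp_zero_pos e he)
  have hrec : ∀ t e : ℕ, 1 ≤ t → cdim Sq1 t e + cdim Sq1 t (e+1) = e.choose (t-1) := by
    intro t e ht
    rw [cdim_transport Sq1 hmul hγ, cdim_transport Sq1 hmul hγ]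
    have hds := dim_step Sq1 hmul hγ t e ht
    rw [card_Fcomp t (e+1) ht (by omega)] at hds
    simpa using hds
  refine ⟨h00, ?_, h0d, ?_⟩
  · intro s hs
    exact hlow s 0 hs hs
  · intro s d hs _
    exact recurrence_abstract (fun a b => cdim Sq1 a b) h00 h0d hlow hrec s d hs

end
end
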